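/- arXiv:1406.0885 — 2 statements merged into one kernel-verified Lean document; each statement's English description precedes it below -/
import Mathlib

section
/- Let ω : [0,T] → ℝ be a continuous path with ω(0) = 0 and b < 0 < b̄. Set α₀ = b/(b̄−b) and α₁ = 1/(b̄−b). Then the indicator of the event {sup_{t≤T} ω(t) ≥ b̄ and inf_{t≤T} ω(t) > b} is bounded above by α₁·ω(T) − α₀ − α₁·(ω(T)−b̄)·1_{H_{b̄} < H_b ∧ T} − α₁·(ω(T)−b)·1_{H_b < H_{b̄} ∧ T}. -/
open Set

noncomputable def pos (x : ℝ) : ℝ := max x 0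

open Classical in
noncomputable def ind (P : Prop) : ℝ := if P then 1 else 0

/-- First hitting time (before time `T`) of level `x` by the path `ω`, valued in `EReal`
(`⊤` if the level is not hit in `[0,T]`). -/
noncomputable def hit (ω : ℝ → ℝ) (T x : ℝ) : EReal :=
  sInf {s : EReal | ∃ t : ℝ, s = (t : EReal) ∧ 0 ≤ t ∧ t ≤ T ∧ ω t = x}

/-! Stopping the path at `H_lb ∧ H_ub ∧ T`, the right-hand side is `1` when `ub` is hit first,
`0` when `lb` is hit first, and `(ω T - lb) / (ub - lb)` otherwise. In the last case `ω T ≥ lb`,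
since otherwise `lb` would be hit before `T`, and so one of the two levels would be hit first;
and on the event of the left-hand side `lb` is never hit, so `ub` is first reached exactly at
time `T` and `ω T = ub`. -/

lemma ind_le_one (P : Prop) : ind P ≤ 1 := by
  unfold ind; split <;> norm_num

lemma ind_of_pos {P : Prop} (h : P) : ind P = 1 := by simp [ind, h]

lemma ind_of_neg {P : Prop} (h : ¬ P) : ind P = 0 := by simp [ind, h]

section Hit

variable {ω : ℝ → ℝ} {T x y t : ℝ}

lemma hit_le (ht : t ∈ Icc 0 T) (hx : ω t = x) : hit ω T x ≤ t :=
  sInf_le ⟨t, rfl, ht.1, ht.2, hx⟩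

lemma exists_mem_Icc_of_hit_lt_top (h : hit ω T x < ⊤) : ∃ t ∈ Icc 0 T, ω t = x := by
  by_contra! hne
  refine h.ne (sInf_eq_top.2 ?_)
  rintro s ⟨t, rfl, h0, hT, hx⟩
  exact absurd hx (hne t ⟨h0, hT⟩)

lemma exists_hit_eq_coe (hcont : ContinuousOn ω (Icc 0 T)) (h : hit ω T x < ⊤) :
    ∃ t ∈ Icc 0 T, ω t = x ∧ hit ω T x = t := by
  have hcpt : IsCompact (Icc 0 T ∩ ω ⁻¹' {x}) :=
    isCompact_Icc.of_isClosed_subset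
      (hcont.preimage_isClosed_of_isClosed isClosed_Icc isClosed_singleton) inter_subset_left
  obtain ⟨t, ht, hx⟩ := exists_mem_Icc_of_hit_lt_top h
  obtain ⟨t₀, ⟨ht₀, hx₀⟩, hleast⟩ := hcpt.exists_isLeast ⟨t, ht, hx⟩
  refine ⟨t₀, ht₀, hx₀, le_antisymm (hit_le ht₀ hx₀) (le_sInf ?_)⟩
  rintro s ⟨s, rfl, h0, hT, hs⟩
  exact EReal.coe_le_coe_iff.2 (hleast ⟨⟨h0, hT⟩, hs⟩)

lemma hit_lt_top_of_mem_uIcc (hcont : ContinuousOn ω (Icc 0 T)) (ht : t ∈ Icc 0 T)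
    (hx : x ∈ uIcc (ω 0) (ω t)) : hit ω T x < ⊤ := by
  have hsub : uIcc 0 t ⊆ Icc 0 T := by
    rw [uIcc_of_le ht.1]; exact Icc_subset_Icc le_rfl ht.2
  obtain ⟨s, hs, hωs⟩ := intermediate_value_uIcc (hcont.mono hsub) hx
  exact (hit_le (hsub hs) hωs).trans_lt (EReal.coe_lt_top s)

lemma sInf_image_le_of_hit_lt_top (hcont : ContinuousOn ω (Icc 0 T)) (h : hit ω T x < ⊤) :
    sInf (ω '' Icc 0 T) ≤ x := by
  obtain ⟨t, ht, rfl⟩ := exists_mem_Icc_of_hit_lt_top h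
  exact csInf_le (isCompact_Icc.image_of_continuousOn hcont).bddBelow (mem_image_of_mem ω ht)

lemma hit_ne_hit (hcont : ContinuousOn ω (Icc 0 T)) (hxy : x ≠ y) (h : hit ω T x < ⊤) :
    hit ω T x ≠ hit ω T y := by
  intro heq
  obtain ⟨t, -, rfl, ht⟩ := exists_hit_eq_coe hcont h
  obtain ⟨s, -, rfl, hs⟩ := exists_hit_eq_coe hcont (heq ▸ h)
  exact hxy (congrArg ω (EReal.coe_injective (ht.symm.trans (heq.trans hs))))

lemma apply_eq_of_le_hit (hcont : ContinuousOn ω (Icc 0 T)) (h : hit ω T x < ⊤)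
    (hT : (T : EReal) ≤ hit ω T x) : ω T = x := by
  obtain ⟨t, ht, hx, heq⟩ := exists_hit_eq_coe hcont h
  rw [heq, EReal.coe_le_coe_iff] at hT
  rwa [le_antisymm ht.2 hT] at hx

end Hit

section Exit

variable {ω : ℝ → ℝ} {T lb ub : ℝ}

lemma apply_eq_of_le_sSup_of_lt_sInf (hcont : ContinuousOn ω (Icc 0 T)) (hT : 0 ≤ T)
    (hub : ω 0 ≤ ub) (hsup : ub ≤ sSup (ω '' Icc 0 T)) (hinf : lb < sInf (ω '' Icc 0 T))
    (hfirst : ¬ hit ω T ub < min (hit ω T lb) T) : ω T = ub := by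
  have hlb_top : hit ω T lb = ⊤ :=
    not_lt_top_iff.1 fun h => (sInf_image_le_of_hit_lt_top hcont h).not_gt hinf
  have hcpt : IsCompact (ω '' Icc 0 T) := isCompact_Icc.image_of_continuousOn hcont
  obtain ⟨tm, htm, hmax⟩ := hcpt.sSup_mem ((nonempty_Icc.2 hT).image ω)
  have hub_lt_top : hit ω T ub < ⊤ :=
    hit_lt_top_of_mem_uIcc hcont htm (mem_uIcc_of_le hub (hmax ▸ hsup))
  rw [hlb_top, min_eq_right le_top, not_lt] at hfirst
  exact apply_eq_of_le_hit hcont hub_lt_top hfirst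

lemma le_apply_of_not_hit_lt_min (hcont : ContinuousOn ω (Icc 0 T)) (hT : 0 ≤ T)
    (hlb : lb ≤ ω 0) (hne : ub ≠ lb) (hlb_first : ¬ hit ω T lb < min (hit ω T ub) T)
    (hub_first : ¬ hit ω T ub < min (hit ω T lb) T) : lb ≤ ω T := by
  by_contra! hlt
  have hlb_lt_top : hit ω T lb < ⊤ :=
    hit_lt_top_of_mem_uIcc hcont ⟨hT, le_rfl⟩ (mem_uIcc_of_ge hlt.le hlb)
  obtain ⟨t, ht, hωt, hlb_eq⟩ := exists_hit_eq_coe hcont hlb_lt_top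
  have hlb_lt_T : hit ω T lb < T := by
    rw [hlb_eq, EReal.coe_lt_coe_iff]
    exact ht.2.lt_of_ne fun h => hlt.ne (h ▸ hωt)
  have hub_le : hit ω T ub ≤ hit ω T lb := by
    simpa [lt_min_iff, hlb_lt_T] using hlb_first
  have hub_lt : hit ω T ub < hit ω T lb :=
    hub_le.lt_of_ne (hit_ne_hit hcont hne (hub_le.trans_lt hlb_lt_top))
  exact hub_first (lt_min hub_lt (hub_lt.trans hlb_lt_T))

end Exit

theorem stmt1 (T : ℝ) (hT : 0 < T) (ω : ℝ → ℝ)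
    (hcont : ContinuousOn ω (Icc 0 T)) (hω0 : ω 0 = 0)
    (lb ub : ℝ) (hlb : lb < 0) (hub : 0 < ub) :
    ind (ub ≤ sSup (ω '' Icc 0 T) ∧ lb < sInf (ω '' Icc 0 T)) ≤
      (1 / (ub - lb)) * ω T - lb / (ub - lb) -
        (1 / (ub - lb)) * (ω T - ub) *
          ind (hit ω T ub < min (hit ω T lb) (T : EReal)) -
        (1 / (ub - lb)) * (ω T - lb) *
          ind (hit ω T lb < min (hit ω T ub) (T : EReal)) := by
  have hc : 0 < ub - lb := by linarith
  by_cases hlb_first : hit ω T lb < min (hit ω T ub) T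
  · have hub_first : ¬ hit ω T ub < min (hit ω T lb) T := fun h =>
      (h.trans_le (min_le_left _ _)).not_gt (hlb_first.trans_le (min_le_left _ _))
    have hinf : sInf (ω '' Icc 0 T) ≤ lb :=
      sInf_image_le_of_hit_lt_top hcont
        ((hlb_first.trans_le (min_le_right _ _)).trans (EReal.coe_lt_top T))
    rw [ind_of_neg fun h => h.2.not_ge hinf, ind_of_neg hub_first, ind_of_pos hlb_first]
    exact le_of_eq (by field_simp; ring)
  by_cases hub_first : hit ω T ub < min (hit ω T lb) T
  · rw [ind_of_pos hub_first, ind_of_neg hlb_first]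
    calc _ ≤ 1 := ind_le_one _
      _ = _ := by field_simp; ring
  rw [ind_of_neg hub_first, ind_of_neg hlb_first]
  suffices h : ind (ub ≤ sSup (ω '' Icc 0 T) ∧ lb < sInf (ω '' Icc 0 T)) ≤ (ω T - lb) / (ub - lb) by
    convert h using 1; field_simp; ring
  by_cases hevent : ub ≤ sSup (ω '' Icc 0 T) ∧ lb < sInf (ω '' Icc 0 T)
  · rw [ind_of_pos hevent, apply_eq_of_le_sSup_of_lt_sInf hcont hT.le (hω0.trans_le hub.le) hevent.1
      hevent.2 hub_first, div_self hc.ne']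
  · have hωT : lb ≤ ω T := le_apply_of_not_hit_lt_min hcont hT.le (hlb.le.trans_eq hω0.symm)
      (hlb.trans hub).ne' hlb_first hub_first
    rw [ind_of_neg hevent]
    exact div_nonneg (sub_nonneg.2 hωT) hc.le
end

section
/- Let μ be a centred probability measure on ℝ (μ ≠ δ₀) with distribution function F, let b < 0 < b̄, and suppose the quantity ρ₊⁻¹(F(b)) − F(b) < −b/(b̄−b), where ρ₊⁻¹(p) is defined by m_p^{ρ₊⁻¹(p)} = b̄. Then the equation ∫(x−b) dμ_{F(b)}^ξ = −b has a unique solution ξ ∈ (ρ₊⁻¹(F(b)), 1]. -/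
open MeasureTheory Set

/-- Distribution function of `μ`. -/
noncomputable def distF (μ : Measure ℝ) (x : ℝ) : ℝ := (μ (Iic x)).toReal

/-- Left limit `F(x-)` of the distribution function. -/
noncomputable def distFm (μ : Measure ℝ) (x : ℝ) : ℝ := (μ (Iio x)).toReal

/-- Quantile function of `μ`. -/
noncomputable def quantile (μ : Measure ℝ) (u : ℝ) : ℝ :=
  sInf {x : ℝ | u ≤ distF μ x}

/-- The sub-probability measure `μ_p^q`, i.e. `μ` restricted to its quantile range `(p,q]`,
realised as the image under the quantile function of Lebesgue measure on `(p,q]`. -/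
noncomputable def qmeas (μ : Measure ℝ) (p q : ℝ) : Measure ℝ :=
  (volume.restrict (Ioc p q)).map (quantile μ)

/-- `m̃_p^q = ∫ x dμ_p^q`. -/
noncomputable def mtil (μ : Measure ℝ) (p q : ℝ) : ℝ :=
  ∫ u in Ioc p q, quantile μ u

/-- The barycentre `m_p^q` of `μ` restricted to the quantile range `(p,q]`. -/
noncomputable def bary (μ : Measure ℝ) (p q : ℝ) : ℝ :=
  if p < q then (q - p)⁻¹ * mtil μ p q else quantile μ q

/-! On `(F(b), 1)` the quantile function exceeds `b`, so
`G ξ = ∫_{F(b)}^ξ (Q - b)` is continuous and strictly increasing on `[F(b), 1]`.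
At `ξ = ρ₊⁻¹(F(b))` the barycentre condition gives `G ξ = (ξ - F(b)) (b̄ - b) < -b`, while
centring together with `Q ≤ b` on `(0, F(b)]` gives `G 1 ≥ -b`; conclude by the intermediate
value theorem. -/

open Filter ProbabilityTheory Topology intervalIntegral

lemma mtil_eq_of_bary_eq {μ : Measure ℝ} {p q m : ℝ} (hpq : p < q) (h : bary μ p q = m) :
    mtil μ p q = (q - p) * m := by
  rw [bary, if_pos hpq] at h
  rw [← h, mul_inv_cancel_left₀ (sub_pos.2 hpq).ne']

section Quantile

variable {μ : Measure ℝ} [IsProbabilityMeasure μ]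

lemma distF_eq_cdf : distF μ = cdf μ :=
  funext fun x => (cdf_eq_real μ x).symm

lemma distF_mem_Icc (x : ℝ) : distF μ x ∈ Icc 0 1 := by
  rw [distF_eq_cdf]
  exact ⟨cdf_nonneg μ x, cdf_le_one μ x⟩

lemma bddBelow_le_distF {u : ℝ} (hu : 0 < u) : BddBelow {x | u ≤ distF μ x} := by
  obtain ⟨x₀, hx₀⟩ := ((tendsto_cdf_atBot μ).eventually_lt_const hu).exists
  refine ⟨x₀, fun x hx => le_of_not_gt fun hxx₀ => ?_⟩
  change u ≤ distF μ x at hx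
  rw [distF_eq_cdf] at hx
  exact (hx.trans (monotone_cdf μ hxx₀.le)).not_gt hx₀

lemma nonempty_le_distF {u : ℝ} (hu : u < 1) : {x | u ≤ distF μ x}.Nonempty := by
  obtain ⟨x₀, hx₀⟩ := ((tendsto_cdf_atTop μ).eventually_const_lt hu).exists
  exact ⟨x₀, show u ≤ distF μ x₀ by rw [distF_eq_cdf]; exact hx₀.le⟩

lemma quantile_le_of_le_distF {u x : ℝ} (hu : 0 < u) (h : u ≤ distF μ x) :
    quantile μ u ≤ x :=
  csInf_le (bddBelow_le_distF hu) h

lemma quantile_le_iff {u x : ℝ} (hu : u ∈ Ioo 0 1) : quantile μ u ≤ x ↔ u ≤ distF μ x := by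
  refine ⟨fun h => ?_, quantile_le_of_le_distF hu.1⟩
  have hright : ∀ y, x < y → u ≤ distF μ y := fun y hy => by
    obtain ⟨z, hz, hzy⟩ :=
      (csInf_lt_iff (bddBelow_le_distF hu.1) (nonempty_le_distF hu.2)).mp (h.trans_lt hy)
    change u ≤ distF μ z at hz
    rw [distF_eq_cdf] at hz ⊢
    exact hz.trans (monotone_cdf μ hzy.le)
  have hcont : Tendsto (distF μ) (𝓝[>] x) (𝓝 (distF μ x)) := by
    rw [distF_eq_cdf]
    exact ((cdf μ).right_continuous x).tendsto.mono_left (nhdsWithin_mono _ Ioi_subset_Ici_self)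
  exact ge_of_tendsto hcont (eventually_nhdsWithin_of_forall hright)

lemma lt_quantile_of_distF_lt {u x : ℝ} (hxu : distF μ x < u) (hu : u < 1) :
    x < quantile μ u := by
  have hu0 : 0 < u := ENNReal.toReal_nonneg.trans_lt hxu
  exact lt_of_not_ge fun h => ((quantile_le_iff ⟨hu0, hu⟩).mp h).not_gt hxu

lemma monotoneOn_quantile : MonotoneOn (quantile μ) (Ioo 0 1) :=
  fun _ hu _ hv huv =>
    csInf_le_csInf (bddBelow_le_distF hu.1) (nonempty_le_distF hv.2) fun _ hx => huv.trans hx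

lemma aemeasurable_quantile : AEMeasurable (quantile μ) (volume.restrict (Ioc 0 1)) := by
  rw [Measure.restrict_congr_set Ioo_ae_eq_Ioc.symm]
  exact aemeasurable_restrict_of_monotoneOn measurableSet_Ioo monotoneOn_quantile

lemma map_quantile_volume : (volume.restrict (Ioc 0 1)).map (quantile μ) = μ := by
  have : IsProbabilityMeasure (volume.restrict (Ioc (0 : ℝ) 1)) := ⟨by simp⟩
  have : IsProbabilityMeasure ((volume.restrict (Ioc (0 : ℝ) 1)).map (quantile μ)) :=
    Measure.isProbabilityMeasure_map aemeasurable_quantile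
  refine Measure.ext_of_Iic _ μ fun x => ?_
  rw [Measure.map_apply_of_aemeasurable aemeasurable_quantile measurableSet_Iic,
    Measure.restrict_congr_set Ioo_ae_eq_Ioc.symm, Measure.restrict_apply' measurableSet_Ioo]
  have hpre : quantile μ ⁻¹' Iic x ∩ Ioo 0 1 = Iic (distF μ x) ∩ Ioo 0 1 := by
    ext u
    simp only [mem_inter_iff, mem_preimage, mem_Iic]
    exact and_congr_left quantile_le_iff
  rw [hpre, measure_congr ((ae_eq_refl _).inter Ioo_ae_eq_Ioc),
    Iic_inter_Ioc_of_le (distF_mem_Icc x).2,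
    Real.volume_Ioc, sub_zero, distF, ENNReal.ofReal_toReal (measure_ne_top μ _)]

lemma integrableOn_quantile (hint : Integrable id μ) :
    IntegrableOn (quantile μ) (Ioc 0 1) := by
  rw [← map_quantile_volume (μ := μ)] at hint
  exact (integrable_map_measure hint.aestronglyMeasurable aemeasurable_quantile).mp hint

lemma intervalIntegrable_quantile (hint : Integrable id μ) {a b : ℝ} (ha : a ∈ Icc 0 1)
    (hb : b ∈ Icc 0 1) : IntervalIntegrable (quantile μ) volume a b := by
  have h01 : IntervalIntegrable (quantile μ) volume 0 1 :=
    (intervalIntegrable_iff_integrableOn_Ioc_of_le zero_le_one).mpr (integrableOn_quantile hint)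
  refine h01.mono_set ?_
  rw [uIcc_of_le zero_le_one]
  exact uIcc_subset_Icc ha hb

lemma integral_quantile (hint : Integrable id μ) : ∫ u in 0..1, quantile μ u = ∫ x, x ∂μ := by
  rw [integral_of_le zero_le_one, ← integral_map (f := fun x => x) aemeasurable_quantile,
    map_quantile_volume]
  rw [map_quantile_volume]
  exact hint.aestronglyMeasurable

lemma integral_quantile_le (hint : Integrable id μ) (x : ℝ) :
    ∫ u in 0..distF μ x, quantile μ u ≤ distF μ x * x := by
  have hF := distF_mem_Icc (μ := μ) x
  calc ∫ u in 0..distF μ x, quantile μ u ≤ ∫ _ in 0..distF μ x, x :=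
        integral_mono_on_of_le_Ioo hF.1 (intervalIntegrable_quantile hint ⟨le_rfl, zero_le_one⟩ hF)
          intervalIntegrable_const fun u hu => quantile_le_of_le_distF hu.1 hu.2.le
    _ = distF μ x * x := by rw [intervalIntegral.integral_const, sub_zero, smul_eq_mul]

lemma neg_le_integral_quantile_sub (hint : Integrable id μ) (hcent : ∫ x, x ∂μ = 0) (x : ℝ) :
    -x ≤ ∫ u in distF μ x..1, (quantile μ u - x) := by
  have hF := distF_mem_Icc (μ := μ) x
  have hsplit := integral_add_adjacent_intervals
    (intervalIntegrable_quantile hint (left_mem_Icc.2 zero_le_one) hF)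
    (intervalIntegrable_quantile hint hF (right_mem_Icc.2 zero_le_one))
  rw [integral_quantile hint, hcent] at hsplit
  rw [integral_sub (intervalIntegrable_quantile hint hF (right_mem_Icc.2 zero_le_one))
    intervalIntegrable_const, intervalIntegral.integral_const, smul_eq_mul]
  linarith [integral_quantile_le hint x]

lemma integral_quantile_sub_of_bary_eq (hint : Integrable id μ) {p q m : ℝ} (hp : 0 ≤ p)
    (hpq : p ≤ q) (hq : q ≤ 1) (h : bary μ p q = m) (c : ℝ) :
    ∫ u in p..q, (quantile μ u - c) = (q - p) * (m - c) := by
  rcases hpq.eq_or_lt with rfl | hpq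
  · simp
  rw [integral_sub (intervalIntegrable_quantile hint ⟨hp, hpq.le.trans hq⟩ ⟨hp.trans hpq.le, hq⟩)
    intervalIntegrable_const, intervalIntegral.integral_const, smul_eq_mul, integral_of_le hpq.le,
    ← mtil, mtil_eq_of_bary_eq hpq h]
  ring

end Quantile

lemma strictMonoOn_integral_of_pos {f : ℝ → ℝ} {a b : ℝ} (hf : IntervalIntegrable f volume a b)
    (hpos : ∀ u ∈ Ioo a b, 0 < f u) : StrictMonoOn (fun ξ => ∫ u in a..ξ, f u) (Icc a b) := by
  intro x hx y hy hxy
  dsimp only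
  have hsub : ∀ {c d}, c ∈ Icc a b → d ∈ Icc a b → IntervalIntegrable f volume c d :=
    fun hc hd => hf.mono_set (by rw [uIcc_of_le (hx.1.trans hx.2)]; exact uIcc_subset_Icc hc hd)
  rw [← integral_add_adjacent_intervals (hsub (left_mem_Icc.2 (hx.1.trans hx.2)) hx) (hsub hx hy)]
  exact lt_add_of_pos_right _ <| intervalIntegral_pos_of_pos_on (hsub hx hy)
    (fun u hu => hpos u ⟨hx.1.trans_lt hu.1, hu.2.trans_le hy.2⟩) hxy

theorem stmt9_general (μ : Measure ℝ) [IsProbabilityMeasure μ]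
    (hint : Integrable id μ) (hcent : ∫ x, x ∂μ = 0)
    (lb ub : ℝ) (hlb : lb < 0) (hub : 0 < ub)
    (r : ℝ) (hr0 : distF μ lb ≤ r) (hr1 : r ≤ 1)
    (hr : bary μ (distF μ lb) r = ub)
    (hlt : r - distF μ lb < -lb / (ub - lb)) :
    ∃! ξ, ξ ∈ Ioc r 1 ∧
      (∫ u in Ioc (distF μ lb) ξ, (quantile μ u - lb)) = -lb := by
  set p := distF μ lb
  set G : ℝ → ℝ := fun ξ => ∫ u in p..ξ, (quantile μ u - lb)
  have hp : p ∈ Icc 0 1 := distF_mem_Icc lb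
  have hf : IntervalIntegrable (fun u => quantile μ u - lb) volume p 1 :=
    (intervalIntegrable_quantile hint hp (right_mem_Icc.2 zero_le_one)).sub intervalIntegrable_const
  have hmono : StrictMonoOn G (Icc p 1) :=
    strictMonoOn_integral_of_pos hf fun u hu => sub_pos.2 (lt_quantile_of_distF_lt hu.1 hu.2)
  have hcont : ContinuousOn G (Icc p 1) := by
    simpa only [uIcc_of_le hp.2] using continuousOn_primitive_interval' hf left_mem_uIcc
  have hGr : G r < -lb := by
    simp only [G]
    rw [integral_quantile_sub_of_bary_eq hint hp.1 hr0 hr1 hr, ← lt_div_iff₀ (by linarith)]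
    exact hlt
  obtain ⟨ξ, hξ, hGξ⟩ := intermediate_value_Ioc hr1 (hcont.mono (Icc_subset_Icc_left hr0))
    ⟨hGr, neg_le_integral_quantile_sub hint hcent lb⟩
  have hG : ∀ η ∈ Ioc r 1, G η = ∫ u in Ioc p η, (quantile μ u - lb) :=
    fun η hη => integral_of_le (hr0.trans hη.1.le)
  have hIcc : ∀ η ∈ Ioc r 1, η ∈ Icc p 1 := fun η hη => ⟨hr0.trans hη.1.le, hη.2⟩
  refine ⟨ξ, ⟨hξ, (hG ξ hξ).symm.trans hGξ⟩, fun η ⟨hη, hGη⟩ => ?_⟩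
  exact hmono.injOn (hIcc η hη) (hIcc ξ hξ) <| by rw [hG η hη, hGη, hGξ]

theorem stmt9 (μ : Measure ℝ) [IsProbabilityMeasure μ]
    (hint : Integrable id μ) (hcent : ∫ x, x ∂μ = 0)
    (hne : μ ≠ Measure.dirac 0) (lb ub : ℝ) (hlb : lb < 0) (hub : 0 < ub)
    (r : ℝ) (hr0 : distF μ lb ≤ r) (hr1 : r ≤ 1)
    (hr : bary μ (distF μ lb) r = ub)
    (hlt : r - distF μ lb < -lb / (ub - lb)) :
    ∃! ξ, ξ ∈ Ioc r 1 ∧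
      (∫ u in Ioc (distF μ lb) ξ, (quantile μ u - lb)) = -lb :=
  stmt9_general μ hint hcent lb ub hlb hub r hr0 hr1 hr hlt
end
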